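/- Let y = Ax + v, where A ∈ ℝ^{m×n}, x ∈ ℝⁿ is K-sparse with nonempty support Ω = supp(x), and ‖v‖₂ ≤ ε. Suppose δ ∈ [0,1) satisfies the RIP of order K+1 for A with δ < 1/√(K+1), and suppose min_{i∈Ω}|x_i| > 2ε/(1 − √(K+1)·δ). Consider any sequence produced by the OMP algorithm: S₀ = ∅, r⁰ = y, and for k ≥ 1, s^k is any index maximizing |⟨r^{k−1}, A_i⟩| over 1 ≤ i ≤ n, S_k = S_{k−1} ∪ {s^k}, and r^k = P_{S_k}^⊥ y. Then ‖r^k‖₂ > ε for every 0 ≤ k < |Ω|, S_{|Ω|} = Ω, and ‖r^{|Ω|}‖₂ ≤ ε; that is, OMP with stopping criterion ‖r^k‖₂ ≤ ε performs exactly |Ω| iterations and exactly recovers the support Ω of x. -/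

import Mathlib

open Matrix Finset

/-- The Euclidean (`ℓ₂`) norm of a real vector. -/
noncomputable def l2norm {ι : Type*} [Fintype ι] (v : ι → ℝ) : ℝ :=
  Real.sqrt (∑ i, v i ^ 2)

/-- The support `{i : x i ≠ 0}` of a vector, as a `Finset`. -/
noncomputable def sparseSupport {n : ℕ} (x : Fin n → ℝ) : Finset (Fin n) :=
  Finset.univ.filter (fun i => x i ≠ 0)

/-- `δ` satisfies the restricted isometry property of order `k` for `A`:
`(1-δ)‖x‖₂² ≤ ‖Ax‖₂² ≤ (1+δ)‖x‖₂²` for all `x` with at most `k` nonzero entries. -/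
def RIP {m n : ℕ} (A : Matrix (Fin m) (Fin n) ℝ) (k : ℕ) (δ : ℝ) : Prop :=
  ∀ x : Fin n → ℝ, (sparseSupport x).card ≤ k →
    (1 - δ) * (∑ i, x i ^ 2) ≤ (∑ i, (A.mulVec x) i ^ 2) ∧
    (∑ i, (A.mulVec x) i ^ 2) ≤ (1 + δ) * (∑ i, x i ^ 2)

/-- The submatrix `A_S` of `A` containing only the columns indexed by `S`. -/
def colSub {m n : ℕ} (A : Matrix (Fin m) (Fin n) ℝ) (S : Finset (Fin n)) :
    Matrix (Fin m) {j // j ∈ S} ℝ :=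
  fun i j => A i j.1

/-- The orthogonal complement projector `P_S^⊥ = I - A_S (A_Sᵀ A_S)⁻¹ A_Sᵀ`
(equal to `I` when `S = ∅`). -/
noncomputable def projPerp {m n : ℕ} (A : Matrix (Fin m) (Fin n) ℝ) (S : Finset (Fin n)) :
    Matrix (Fin m) (Fin m) ℝ :=
  1 - colSub A S * ((colSub A S)ᵀ * colSub A S)⁻¹ * (colSub A S)ᵀ

/-- The subvector `x_T`, extended by zero outside `T` (so that `A_T x_T = A (restrictVec x T)`). -/
def restrictVec {n : ℕ} (x : Fin n → ℝ) (T : Finset (Fin n)) : Fin n → ℝ :=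
  fun i => if i ∈ T then x i else 0

/-- `‖(w i)_{i ∈ T}‖_∞ = max_{i ∈ T} |w i|` (equal to `0` when `T = ∅`). -/
noncomputable def supAbs {n : ℕ} (T : Finset (Fin n)) (w : Fin n → ℝ) : ℝ :=
  sSup ((fun i => |w i|) '' ↑T)

/-!
At a step with `S ⊊ Ω`, put `T = Ω \ S`, `u = x_T` and `B = P_S^⊥ A`. Since `P_S^⊥` kills the
columns in `S`, the residual is `r = B u + P_S^⊥ v` and `Aᵀ r = Bᵀ r`. On supports disjoint
from `S`, `B` inherits the RIP bounds of `A` with the same `δ`, so by polarization `Bᵀ B` is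
`δ`-close to the identity there: on every admissible `U ⊇ T` the correlations `Aᵀ r` lie within
`D = δ‖u‖ + √(1+δ) ε` of `u`. Were the greedy index `j` outside `T`, every entry of `Aᵀ r` on `T`
would be at most `|(Aᵀ r)_j|`, and Cauchy–Schwarz would give `‖u‖ ≤ √(|T|+1) D`, which the
hypothesis on `min |x_i|` rules out; the same hypothesis gives `‖r‖ ≥ √(1-δ)‖u‖ - ε > ε`.
After `|Ω|` correct steps `S = Ω`, and `r = P_Ω^⊥ v` has norm at most `ε`.
-/

section L2

variable {ι : Type*} [Fintype ι]

lemma l2norm_eq_norm (v : ι → ℝ) : l2norm v = ‖WithLp.toLp 2 v‖ := by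
  simp [l2norm, EuclideanSpace.norm_eq]

lemma l2norm_nonneg (v : ι → ℝ) : 0 ≤ l2norm v :=
  Real.sqrt_nonneg _

lemma l2norm_sq (v : ι → ℝ) : l2norm v ^ 2 = ∑ i, v i ^ 2 :=
  Real.sq_sqrt (sum_nonneg fun _ _ => sq_nonneg _)

lemma l2norm_sq_eq_dotProduct (v : ι → ℝ) : l2norm v ^ 2 = v ⬝ᵥ v := by
  rw [l2norm_sq]
  simp only [dotProduct, sq]

lemma l2norm_eq_zero {v : ι → ℝ} : l2norm v = 0 ↔ v = 0 := by
  simp [l2norm_eq_norm]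

lemma l2norm_sub_le (v w : ι → ℝ) : l2norm (v - w) ≤ l2norm v + l2norm w := by
  simpa [l2norm_eq_norm] using norm_sub_le (WithLp.toLp 2 v) (WithLp.toLp 2 w)

lemma l2norm_sub_le_l2norm_add (v w : ι → ℝ) : l2norm v - l2norm w ≤ l2norm (v + w) := by
  simpa [l2norm_eq_norm] using norm_sub_le_norm_add (WithLp.toLp 2 v) (WithLp.toLp 2 w)

lemma l2norm_smul (c : ℝ) (v : ι → ℝ) : l2norm (c • v) = |c| * l2norm v := by
  simp [l2norm_eq_norm, norm_smul]

lemma abs_dotProduct_le (v w : ι → ℝ) : |v ⬝ᵥ w| ≤ l2norm v * l2norm w := by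
  simpa [l2norm_eq_norm, EuclideanSpace.inner_eq_star_dotProduct, dotProduct_comm] using
    abs_real_inner_le_norm (WithLp.toLp 2 v) (WithLp.toLp 2 w)

end L2

section Support

variable {n : ℕ}

lemma sparseSupport_subset_iff {x : Fin n → ℝ} {T : Finset (Fin n)} :
    sparseSupport x ⊆ T ↔ ∀ i ∉ T, x i = 0 := by
  simp only [sparseSupport, Finset.subset_iff, Finset.mem_filter, Finset.mem_univ, true_and]
  exact ⟨fun h i hi => by_contra fun hx => hi (h hx), fun h i hx => by_contra fun hi => hx (h i hi)⟩

lemma sparseSupport_restrictVec_subset (x : Fin n → ℝ) (T : Finset (Fin n)) :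
    sparseSupport (restrictVec x T) ⊆ T :=
  sparseSupport_subset_iff.2 fun _ hi => if_neg hi

lemma restrictVec_eq_self {x : Fin n → ℝ} {T : Finset (Fin n)} (h : sparseSupport x ⊆ T) :
    restrictVec x T = x := by
  funext i
  by_cases hi : i ∈ T
  · exact if_pos hi
  · rw [restrictVec, if_neg hi, sparseSupport_subset_iff.1 h i hi]

lemma l2norm_restrictVec_sq (x : Fin n → ℝ) (T : Finset (Fin n)) :
    l2norm (restrictVec x T) ^ 2 = ∑ i ∈ T, x i ^ 2 := by
  simp [l2norm_sq, restrictVec, ite_pow]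

lemma l2norm_restrictVec_insert_sq (x : Fin n → ℝ) {T : Finset (Fin n)} {j : Fin n} (hj : j ∉ T) :
    l2norm (restrictVec x (insert j T)) ^ 2 = x j ^ 2 + l2norm (restrictVec x T) ^ 2 := by
  simp only [l2norm_restrictVec_sq, sum_insert hj]

lemma dotProduct_restrictVec_self (x : Fin n → ℝ) (T : Finset (Fin n)) :
    restrictVec x T ⬝ᵥ restrictVec x T = restrictVec x T ⬝ᵥ x :=
  sum_congr rfl fun i _ => by simp only [restrictVec]; split_ifs <;> ring

lemma dotProduct_eq_zero_of_disjoint {x z : Fin n → ℝ} {V S : Finset (Fin n)} (hVS : Disjoint V S)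
    (hx : sparseSupport x ⊆ V) (hz : sparseSupport z ⊆ S) : x ⬝ᵥ z = 0 := by
  refine sum_eq_zero fun i _ => ?_
  by_cases hi : i ∈ V
  · rw [sparseSupport_subset_iff.1 hz i (disjoint_left.1 hVS hi), mul_zero]
  · rw [sparseSupport_subset_iff.1 hx i hi, zero_mul]

end Support

def RIPOn {m n : ℕ} (B : Matrix (Fin m) (Fin n) ℝ) (V : Finset (Fin n)) (δ : ℝ) : Prop :=
  ∀ z : Fin n → ℝ, sparseSupport z ⊆ V →
    (1 - δ) * l2norm z ^ 2 ≤ l2norm (B *ᵥ z) ^ 2 ∧ l2norm (B *ᵥ z) ^ 2 ≤ (1 + δ) * l2norm z ^ 2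

section RIPOn

variable {m n k : ℕ} {B : Matrix (Fin m) (Fin n) ℝ} {V : Finset (Fin n)} {δ : ℝ}

lemma RIP.ripOn (hB : RIP B k δ) (hV : V.card ≤ k) : RIPOn B V δ := fun z hz => by
  simpa only [l2norm_sq] using hB z ((card_le_card hz).trans hV)

lemma RIPOn.l2norm_mulVec_le (hB : RIPOn B V δ) (hδ : 0 ≤ δ) {z : Fin n → ℝ}
    (hz : sparseSupport z ⊆ V) : l2norm (B *ᵥ z) ≤ √(1 + δ) * l2norm z := by
  rw [← Real.sqrt_sq (l2norm_nonneg (B *ᵥ z)), ← Real.sqrt_sq (l2norm_nonneg z),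
    ← Real.sqrt_mul (by linarith)]
  exact Real.sqrt_le_sqrt (hB z hz).2

lemma RIPOn.sqrt_mul_le_l2norm_mulVec (hB : RIPOn B V δ) (hδ : δ ≤ 1) {z : Fin n → ℝ}
    (hz : sparseSupport z ⊆ V) : √(1 - δ) * l2norm z ≤ l2norm (B *ᵥ z) := by
  rw [← Real.sqrt_sq (l2norm_nonneg (B *ᵥ z)), ← Real.sqrt_sq (l2norm_nonneg z),
    ← Real.sqrt_mul (by linarith)]
  exact Real.sqrt_le_sqrt (hB z hz).1

lemma RIPOn.dotProduct_sub_le (hB : RIPOn B V δ) {p q : Fin n → ℝ}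
    (hp : sparseSupport p ⊆ V) (hq : sparseSupport q ⊆ V) :
    (B *ᵥ p) ⬝ᵥ (B *ᵥ q) - p ⬝ᵥ q ≤ δ * (l2norm p ^ 2 + l2norm q ^ 2) / 2 := by
  have hadd := (hB (p + q) (sparseSupport_subset_iff.2 fun i hi => by
    simp [sparseSupport_subset_iff.1 hp i hi, sparseSupport_subset_iff.1 hq i hi])).2
  have hsub := (hB (p - q) (sparseSupport_subset_iff.2 fun i hi => by
    simp [sparseSupport_subset_iff.1 hp i hi, sparseSupport_subset_iff.1 hq i hi])).1
  simp only [l2norm_sq_eq_dotProduct, mulVec_add, mulVec_sub, add_dotProduct, dotProduct_add,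
    sub_dotProduct, dotProduct_sub, dotProduct_comm q p, dotProduct_comm (B *ᵥ q)] at hadd hsub ⊢
  linarith

/-- Polarization, made homogeneous by applying it to `‖w‖ • z` and `±‖z‖ • w`. -/
lemma RIPOn.abs_dotProduct_sub_le (hB : RIPOn B V δ) {z w : Fin n → ℝ}
    (hz : sparseSupport z ⊆ V) (hw : sparseSupport w ⊆ V) :
    |(B *ᵥ z) ⬝ᵥ (B *ᵥ w) - z ⬝ᵥ w| ≤ δ * l2norm z * l2norm w := by
  set a := l2norm z
  set b := l2norm w
  set X := (B *ᵥ z) ⬝ᵥ (B *ᵥ w) - z ⬝ᵥ w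
  have ha : 0 ≤ a := l2norm_nonneg z
  have hb : 0 ≤ b := l2norm_nonneg w
  rcases (mul_nonneg ha hb).eq_or_lt with hab | hab
  · have hX : X = 0 := by
      rcases mul_eq_zero.1 hab.symm with h | h <;> simp [X, l2norm_eq_zero.1 h]
    rw [hX, mul_assoc, ← hab]
    simp
  have hsupp {c : ℝ} {p : Fin n → ℝ} (hp : sparseSupport p ⊆ V) : sparseSupport (c • p) ⊆ V :=
    sparseSupport_subset_iff.2 fun i hi => by simp [sparseSupport_subset_iff.1 hp i hi]
  have h₁ := hB.dotProduct_sub_le (hsupp (c := b) hz) (hsupp (c := a) hw)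
  have h₂ := hB.dotProduct_sub_le (hsupp (c := b) hz) (hsupp (c := -a) hw)
  simp only [l2norm_smul, abs_neg, abs_of_nonneg ha, abs_of_nonneg hb, mulVec_smul,
    smul_dotProduct, dotProduct_smul, smul_eq_mul] at h₁ h₂
  refine abs_le.2 ⟨?_, ?_⟩
  · refine le_of_mul_le_mul_left ?_ hab
    linarith
  · refine le_of_mul_le_mul_left ?_ hab
    linarith

end RIPOn

section Projection

variable {m n : ℕ} (A : Matrix (Fin m) (Fin n) ℝ) (S : Finset (Fin n))

def extendByZero (u : {j // j ∈ S} → ℝ) : Fin n → ℝ :=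
  fun j => if h : j ∈ S then u ⟨j, h⟩ else 0

lemma sparseSupport_extendByZero_subset (u : {j // j ∈ S} → ℝ) :
    sparseSupport (extendByZero S u) ⊆ S :=
  sparseSupport_subset_iff.2 fun _ hj => dif_neg hj

lemma colSub_mulVec (u : {j // j ∈ S} → ℝ) : colSub A S *ᵥ u = A *ᵥ extendByZero S u := by
  funext i
  calc (colSub A S *ᵥ u) i = ∑ j : S, A i j * extendByZero S u j := by
        simp [mulVec, dotProduct, colSub, extendByZero]
    _ = ∑ j ∈ S, A i j * extendByZero S u j := sum_coe_sort S fun j => A i j * extendByZero S u j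
    _ = (A *ᵥ extendByZero S u) i :=
        sum_subset (subset_univ S) fun j _ hj => by simp [extendByZero, hj]

lemma isUnit_det_gram {k : ℕ} {δ : ℝ} (hA : RIP A k δ) (hδ : δ < 1) (hS : S.card ≤ k) :
    IsUnit ((colSub A S)ᵀ * colSub A S).det := by
  rw [isUnit_iff_ne_zero]
  intro h0
  obtain ⟨u, hu0, hu⟩ := exists_mulVec_eq_zero_iff.2 h0
  have hAu : A *ᵥ extendByZero S u = 0 := by
    rw [← colSub_mulVec, ← dotProduct_self_eq_zero, dotProduct_mulVec, ← mulVec_transpose,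
      mulVec_mulVec, hu, zero_dotProduct]
  have hRIPu := ((hA.ripOn hS) _ (sparseSupport_extendByZero_subset S u)).1
  rw [hAu, l2norm_eq_zero.2 rfl] at hRIPu
  have hz : extendByZero S u = 0 := by
    have h : l2norm (extendByZero S u) ^ 2 ≤ 0 := by nlinarith
    exact l2norm_eq_zero.1 (pow_eq_zero_iff two_ne_zero |>.1 (h.antisymm (sq_nonneg _)))
  exact hu0 (funext fun j => by simpa [extendByZero] using congrFun hz j)

lemma projPerp_transpose : (projPerp A S)ᵀ = projPerp A S := by
  rw [projPerp, transpose_sub, transpose_one, transpose_mul, transpose_mul, transpose_transpose,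
    transpose_nonsing_inv, transpose_mul, transpose_transpose, Matrix.mul_assoc]

lemma projPerp_mulVec_dotProduct (a b : Fin m → ℝ) :
    (projPerp A S *ᵥ a) ⬝ᵥ b = a ⬝ᵥ (projPerp A S *ᵥ b) := by
  rw [dotProduct_comm, dotProduct_mulVec, ← mulVec_transpose, projPerp_transpose, dotProduct_comm]

variable {A S}

lemma projPerp_mul_colSub (hS : IsUnit ((colSub A S)ᵀ * colSub A S).det) :
    projPerp A S * colSub A S = 0 := by
  rw [projPerp, Matrix.sub_mul, Matrix.one_mul, Matrix.mul_assoc, Matrix.mul_assoc,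
    nonsing_inv_mul _ hS, Matrix.mul_one, sub_self]

lemma projPerp_mul_self (hS : IsUnit ((colSub A S)ᵀ * colSub A S).det) :
    projPerp A S * projPerp A S = projPerp A S := by
  have h : projPerp A S * projPerp A S = projPerp A S * 1 -
      projPerp A S * (colSub A S * ((colSub A S)ᵀ * colSub A S)⁻¹ * (colSub A S)ᵀ) := by
    rw [← Matrix.mul_sub]
    rfl
  rw [h, Matrix.mul_one, ← Matrix.mul_assoc, ← Matrix.mul_assoc, projPerp_mul_colSub hS,
    Matrix.zero_mul, Matrix.zero_mul, sub_zero]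

lemma l2norm_projPerp_mulVec_le (hS : IsUnit ((colSub A S)ᵀ * colSub A S).det) (u : Fin m → ℝ) :
    l2norm (projPerp A S *ᵥ u) ≤ l2norm u := by
  have h : l2norm (projPerp A S *ᵥ u) ^ 2 ≤ l2norm u * l2norm (projPerp A S *ᵥ u) := by
    rw [l2norm_sq_eq_dotProduct, projPerp_mulVec_dotProduct, mulVec_mulVec, projPerp_mul_self hS]
    exact (le_abs_self _).trans (abs_dotProduct_le _ _)
  nlinarith [l2norm_nonneg u, l2norm_nonneg (projPerp A S *ᵥ u)]

lemma projPerp_mul_apply_of_mem (hS : IsUnit ((colSub A S)ᵀ * colSub A S).det) (i : Fin m)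
    {j : Fin n} (hj : j ∈ S) : (projPerp A S * A) i j = 0 :=
  congrFun (congrFun (projPerp_mul_colSub hS) i) ⟨j, hj⟩

lemma projPerp_mul_mulVec_eq_zero (hS : IsUnit ((colSub A S)ᵀ * colSub A S).det)
    {z : Fin n → ℝ} (hz : sparseSupport z ⊆ S) : (projPerp A S * A) *ᵥ z = 0 := by
  funext i
  change ∑ j, (projPerp A S * A) i j * z j = 0
  refine sum_eq_zero fun j _ => ?_
  by_cases hj : j ∈ S
  · rw [projPerp_mul_apply_of_mem hS i hj, zero_mul]
  · rw [sparseSupport_subset_iff.1 hz j hj, mul_zero]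

lemma exists_projPerp_mul_mulVec_eq (z : Fin n → ℝ) :
    ∃ g : Fin n → ℝ, sparseSupport g ⊆ S ∧ (projPerp A S * A) *ᵥ z = A *ᵥ (z - g) := by
  refine ⟨extendByZero S ((((colSub A S)ᵀ * colSub A S)⁻¹ * (colSub A S)ᵀ) *ᵥ (A *ᵥ z)),
    sparseSupport_extendByZero_subset S _, ?_⟩
  rw [mulVec_sub, ← colSub_mulVec, projPerp, ← mulVec_mulVec, Matrix.sub_mulVec, one_mulVec,
    Matrix.mul_assoc, ← mulVec_mulVec]

lemma transpose_mulVec_projPerp_mulVec (hS : IsUnit ((colSub A S)ᵀ * colSub A S).det)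
    (u : Fin m → ℝ) :
    Aᵀ *ᵥ (projPerp A S *ᵥ u) = (projPerp A S * A)ᵀ *ᵥ (projPerp A S *ᵥ u) := by
  rw [transpose_mul, projPerp_transpose, ← mulVec_mulVec, mulVec_mulVec _ (projPerp A S),
    projPerp_mul_self hS]

lemma projPerp_mul_mulVec_eq_restrictVec (hS : IsUnit ((colSub A S)ᵀ * colSub A S).det)
    (x : Fin n → ℝ) :
    (projPerp A S * A) *ᵥ x = (projPerp A S * A) *ᵥ restrictVec x (sparseSupport x \ S) := by
  rw [← sub_eq_zero, ← mulVec_sub]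
  refine projPerp_mul_mulVec_eq_zero hS (sparseSupport_subset_iff.2 fun i hi => ?_)
  by_cases hx : x i = 0
  · simp [restrictVec, hx]
  · simp [restrictVec, hi, sparseSupport, hx]

lemma transpose_mulVec_projPerp_mulVec_apply_of_mem
    (hS : IsUnit ((colSub A S)ᵀ * colSub A S).det) (u : Fin m → ℝ) {j : Fin n} (hj : j ∈ S) :
    (Aᵀ *ᵥ (projPerp A S *ᵥ u)) j = 0 := by
  rw [transpose_mulVec_projPerp_mulVec hS]
  simp only [mulVec, dotProduct, transpose_apply, projPerp_mul_apply_of_mem hS _ hj, zero_mul,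
    sum_const_zero]

lemma projPerp_mulVec_mulVec_add (hS : IsUnit ((colSub A S)ᵀ * colSub A S).det)
    (x : Fin n → ℝ) (v : Fin m → ℝ) :
    projPerp A S *ᵥ (A *ᵥ x + v) =
      (projPerp A S * A) *ᵥ restrictVec x (sparseSupport x \ S) + projPerp A S *ᵥ v := by
  rw [mulVec_add, mulVec_mulVec, projPerp_mul_mulVec_eq_restrictVec hS]

lemma RIP.ripOn_projPerp_mul {k : ℕ} {δ : ℝ} {V : Finset (Fin n)} (hA : RIP A k δ) (hδ : δ < 1)
    (hVS : Disjoint V S) (hcard : (V ∪ S).card ≤ k) : RIPOn (projPerp A S * A) V δ := by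
  have hS := isUnit_det_gram A S hA hδ ((card_le_card subset_union_right).trans hcard)
  intro z hz
  constructor
  · obtain ⟨g, hg, hzg⟩ := exists_projPerp_mul_mulVec_eq (A := A) (S := S) z
    have hzgV : sparseSupport (z - g) ⊆ V ∪ S := sparseSupport_subset_iff.2 fun i hi => by
      rw [mem_union, not_or] at hi
      simp [sparseSupport_subset_iff.1 hz i hi.1, sparseSupport_subset_iff.1 hg i hi.2]
    have hnorm : l2norm (z - g) ^ 2 = l2norm z ^ 2 + l2norm g ^ 2 := by
      simp only [l2norm_sq_eq_dotProduct, sub_dotProduct, dotProduct_sub,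
        dotProduct_eq_zero_of_disjoint hVS hz hg, dotProduct_comm g z]
      ring
    rw [hzg]
    refine (mul_le_mul_of_nonneg_left ?_ (by linarith)).trans
      ((hA.ripOn ((card_le_card hzgV).trans hcard) _ subset_rfl).1)
    rw [hnorm]
    exact le_add_of_nonneg_right (sq_nonneg _)
  · rw [← mulVec_mulVec]
    refine (pow_le_pow_left₀ (l2norm_nonneg _) (l2norm_projPerp_mulVec_le hS _) 2).trans ?_
    exact (hA.ripOn ((card_le_card subset_union_left).trans hcard) z hz).2

end Projection

section Selection

variable {m n : ℕ}

lemma RIPOn.l2norm_restrictVec_transpose_mulVec_sub_le {B : Matrix (Fin m) (Fin n) ℝ}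
    {U : Finset (Fin n)} {δ : ℝ} (hB : RIPOn B U δ) (hδ : 0 ≤ δ) {u : Fin n → ℝ}
    (hu : sparseSupport u ⊆ U) (e : Fin m → ℝ) :
    l2norm (restrictVec (Bᵀ *ᵥ (B *ᵥ u + e) - u) U) ≤ δ * l2norm u + √(1 + δ) * l2norm e := by
  set Δ := restrictVec (Bᵀ *ᵥ (B *ᵥ u + e) - u) U
  have hΔ : sparseSupport Δ ⊆ U := sparseSupport_restrictVec_subset _ U
  have hexpand : l2norm Δ ^ 2 = ((B *ᵥ Δ) ⬝ᵥ (B *ᵥ u) - Δ ⬝ᵥ u) + (B *ᵥ Δ) ⬝ᵥ e := by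
    rw [l2norm_sq_eq_dotProduct, dotProduct_restrictVec_self, dotProduct_sub, dotProduct_mulVec,
      vecMul_transpose, dotProduct_add]
    ring
  have h₁ := hB.abs_dotProduct_sub_le hΔ hu
  have h₂ := abs_dotProduct_le (B *ᵥ Δ) e
  have h₃ := hB.l2norm_mulVec_le hδ hΔ
  have hsq : l2norm Δ ^ 2 ≤ l2norm Δ * (δ * l2norm u + √(1 + δ) * l2norm e) := by
    rw [hexpand]
    have := (abs_le.1 h₁).2
    have := le_abs_self ((B *ᵥ Δ) ⬝ᵥ e)
    nlinarith [l2norm_nonneg e]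
  have hD : 0 ≤ δ * l2norm u + √(1 + δ) * l2norm e := by
    have := l2norm_nonneg u; have := l2norm_nonneg e; positivity
  nlinarith [l2norm_nonneg Δ]

lemma exists_lt_abs_of_sq_add_l2norm_sq_le {T : Finset (Fin n)} {u w : Fin n → ℝ} {b D : ℝ}
    (hb : 0 ≤ b) (hD : 0 ≤ D) (hu : sparseSupport u ⊆ T)
    (hsep : √(T.card + 1) * D < l2norm u)
    (hbound : b ^ 2 + l2norm (restrictVec (w - u) T) ^ 2 ≤ D ^ 2) :
    ∃ j ∈ T, b < |w j| := by
  by_contra! hle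
  set E := l2norm (restrictVec (w - u) T)
  have hwT : l2norm (restrictVec w T) ≤ √T.card * b := by
    refine (pow_le_pow_iff_left₀ (l2norm_nonneg _) (by positivity) two_ne_zero).1 ?_
    rw [l2norm_restrictVec_sq, mul_pow, Real.sq_sqrt (Nat.cast_nonneg _)]
    calc ∑ i ∈ T, w i ^ 2 ≤ ∑ _i ∈ T, b ^ 2 :=
          sum_le_sum fun i hi => sq_le_sq' (neg_le_of_abs_le (hle i hi)) (le_of_abs_le (hle i hi))
      _ = T.card * b ^ 2 := by rw [sum_const, nsmul_eq_mul]
  have htri : l2norm u ≤ l2norm (restrictVec w T) + E := by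
    have h : u = restrictVec w T - restrictVec (w - u) T := by
      conv_lhs => rw [← restrictVec_eq_self hu]
      funext i
      simp only [restrictVec, Pi.sub_apply]
      split_ifs <;> ring
    rw [h]
    exact l2norm_sub_le _ _
  -- Cauchy–Schwarz in `ℝ²`: `(√L b + E)² ≤ (L + 1) (b² + E²)`.
  have hcs : (√T.card * b + E) ^ 2 ≤ (√(T.card + 1) * D) ^ 2 := by
    rw [mul_pow, Real.sq_sqrt (by positivity)]
    nlinarith [sq_nonneg (√T.card * E - b), Real.sq_sqrt (Nat.cast_nonneg (α := ℝ) T.card)]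
  have := (pow_le_pow_iff_left₀ (add_nonneg (mul_nonneg (Real.sqrt_nonneg _) hb)
    (l2norm_nonneg _)) (by positivity) two_ne_zero).1 hcs
  linarith

end Selection

section Margins

lemma sqrt_card_mul_lt_l2norm_restrictVec {n : ℕ} {T : Finset (Fin n)} {x : Fin n → ℝ} {M : ℝ}
    (hT : T.Nonempty) (hM : 0 ≤ M) (hx : ∀ i ∈ T, M < |x i|) :
    √T.card * M < l2norm (restrictVec x T) := by
  refine (pow_lt_pow_iff_left₀ (by positivity) (l2norm_nonneg _) two_ne_zero).1 ?_
  rw [l2norm_restrictVec_sq, mul_pow, Real.sq_sqrt (Nat.cast_nonneg _), ← nsmul_eq_mul,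
    ← sum_const]
  exact sum_lt_sum_of_nonempty hT fun i hi => by
    simpa only [sq_abs] using pow_lt_pow_left₀ (hx i hi) hM two_ne_zero

variable {K L : ℕ} {δ ε a : ℝ}

lemma selection_margin (hL : 1 ≤ L) (hLK : L ≤ K) (hδ0 : 0 ≤ δ) (hδ1 : δ < 1) (hε : 0 ≤ ε)
    (hc : √(K + 1) * δ < 1) (ha : 2 * ε * √L < (1 - √(K + 1) * δ) * a) :
    √(L + 1) * (δ * a + √(1 + δ) * ε) < a := by
  have hL' : (1 : ℝ) ≤ L := by exact_mod_cast hL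
  have h₁ : √(L + 1) * √(1 + δ) ≤ 2 * √L := by
    rw [← Real.sqrt_mul (by positivity), ← Real.sqrt_sq (zero_le_two (α := ℝ)),
      ← Real.sqrt_mul (by positivity)]
    exact Real.sqrt_le_sqrt (by nlinarith)
  have h₂ : √(L + 1) ≤ √(K + 1) := Real.sqrt_le_sqrt (by exact_mod_cast Nat.add_le_add_right hLK 1)
  have ha0 : 0 ≤ a := by
    by_contra! h
    nlinarith [Real.sqrt_nonneg (L : ℝ)]
  nlinarith [mul_le_mul_of_nonneg_right h₂ (mul_nonneg hδ0 ha0),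
    mul_le_mul_of_nonneg_right h₁ hε]

lemma residual_margin (hL : 1 ≤ L) (hδ0 : 0 ≤ δ) (hδ1 : δ < 1) (hε : 0 ≤ ε)
    (hc : √(K + 1) * δ < 1) (ha : 2 * ε * √L < (1 - √(K + 1) * δ) * a) :
    2 * ε < √(1 - δ) * a := by
  have h₁ : 1 ≤ √(L : ℝ) := Real.one_le_sqrt.2 (by exact_mod_cast hL)
  have h₂ : 1 ≤ √(K + 1 : ℝ) := Real.one_le_sqrt.2 (by linarith [(K.cast_nonneg : (0 : ℝ) ≤ K)])
  have h₃ : 1 - δ ≤ √(1 - δ) := Real.le_sqrt_of_sq_le (by nlinarith)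
  have ha0 : 0 ≤ a := by
    by_contra! h
    nlinarith
  nlinarith [mul_le_mul_of_nonneg_right h₃ ha0, mul_le_mul_of_nonneg_left h₁ hε,
    mul_nonneg (mul_nonneg (sub_nonneg.2 h₂) hδ0) ha0]

end Margins

section OMPStep

variable {m n k : ℕ} {A : Matrix (Fin m) (Fin n) ℝ} {x : Fin n → ℝ} {v : Fin m → ℝ}
  {S : Finset (Fin n)} {ε δ : ℝ}

lemma omp_correlation_le (hδ0 : 0 ≤ δ) (hδ1 : δ < 1) (hRIP : RIP A k δ) {U : Finset (Fin n)}
    (hTU : sparseSupport x \ S ⊆ U) (hUS : Disjoint U S) (hcard : (U ∪ S).card ≤ k) :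
    l2norm (restrictVec (Aᵀ *ᵥ (projPerp A S *ᵥ (A *ᵥ x + v)) -
        restrictVec x (sparseSupport x \ S)) U) ≤
      δ * l2norm (restrictVec x (sparseSupport x \ S)) + √(1 + δ) * l2norm v := by
  have hS := isUnit_det_gram A S hRIP hδ1 ((card_le_card subset_union_right).trans hcard)
  rw [transpose_mulVec_projPerp_mulVec hS, projPerp_mulVec_mulVec_add hS]
  refine ((hRIP.ripOn_projPerp_mul hδ1 hUS hcard).l2norm_restrictVec_transpose_mulVec_sub_le hδ0
    ((sparseSupport_restrictVec_subset _ _).trans hTU) _).trans ?_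
  gcongr
  exact l2norm_projPerp_mulVec_le hS v

lemma omp_selection_mem (hδ0 : 0 ≤ δ) (hδ1 : δ < 1) (hRIP : RIP A k δ)
    (hcard : (sparseSupport x).card < k) (hS : S ⊆ sparseSupport x) (hv : l2norm v ≤ ε)
    (hsep : √((sparseSupport x \ S).card + 1) *
        (δ * l2norm (restrictVec x (sparseSupport x \ S)) + √(1 + δ) * ε) <
      l2norm (restrictVec x (sparseSupport x \ S)))
    {j : Fin n} (hj : ∀ i, |(Aᵀ *ᵥ (projPerp A S *ᵥ (A *ᵥ x + v))) i| ≤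
      |(Aᵀ *ᵥ (projPerp A S *ᵥ (A *ᵥ x + v))) j|) :
    j ∈ sparseSupport x \ S := by
  set T := sparseSupport x \ S
  set u := restrictVec x T
  set w := Aᵀ *ᵥ (projPerp A S *ᵥ (A *ᵥ x + v))
  set D := δ * l2norm u + √(1 + δ) * ε
  have hD : 0 ≤ D := by
    have := l2norm_nonneg u; have := (l2norm_nonneg v).trans hv; positivity
  have hcorr {U : Finset (Fin n)} (hTU : T ⊆ U) (hUS : Disjoint U S) (hUcard : (U ∪ S).card ≤ k) :
      l2norm (restrictVec (w - u) U) ^ 2 ≤ D ^ 2 := by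
    refine pow_le_pow_left₀ (l2norm_nonneg _)
      ((omp_correlation_le hδ0 hδ1 hRIP hTU hUS hUcard).trans ?_) 2
    exact add_le_add_right (mul_le_mul_of_nonneg_left hv (Real.sqrt_nonneg _)) _
  by_contra hjT
  have hbound : |w j| ^ 2 + l2norm (restrictVec (w - u) T) ^ 2 ≤ D ^ 2 := by
    by_cases hjS : j ∈ S
    · have hdet := isUnit_det_gram A S hRIP hδ1 ((card_le_card hS).trans hcard.le)
      have hw : w j = 0 := transpose_mulVec_projPerp_mulVec_apply_of_mem hdet _ hjS
      rw [hw, abs_zero, zero_pow two_ne_zero, zero_add]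
      exact hcorr subset_rfl sdiff_disjoint (by rw [sdiff_union_of_subset hS]; exact hcard.le)
    · have h := hcorr (subset_insert j T) (disjoint_insert_left.2 ⟨hjS, sdiff_disjoint⟩)
        (by rw [insert_union, sdiff_union_of_subset hS]; exact (card_insert_le _ _).trans hcard)
      rwa [l2norm_restrictVec_insert_sq _ hjT, Pi.sub_apply, show u j = 0 from if_neg hjT, sub_zero,
        ← sq_abs] at h
  obtain ⟨i, -, hi⟩ := exists_lt_abs_of_sq_add_l2norm_sq_le (abs_nonneg (w j)) hD
    (sparseSupport_restrictVec_subset x T) hsep hbound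
  exact (hj i).not_gt hi

lemma omp_residual_gt (hδ1 : δ < 1) (hRIP : RIP A k δ) (hcard : (sparseSupport x).card ≤ k)
    (hS : S ⊆ sparseSupport x) (hv : l2norm v ≤ ε)
    (hsep : 2 * ε < √(1 - δ) * l2norm (restrictVec x (sparseSupport x \ S))) :
    ε < l2norm (projPerp A S *ᵥ (A *ᵥ x + v)) := by
  have hdet := isUnit_det_gram A S hRIP hδ1 ((card_le_card hS).trans hcard)
  have hT := hRIP.ripOn_projPerp_mul hδ1 sdiff_disjoint (by rwa [sdiff_union_of_subset hS])
  have h₁ := hT.sqrt_mul_le_l2norm_mulVec hδ1.le (sparseSupport_restrictVec_subset x _)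
  have h₂ := l2norm_projPerp_mulVec_le hdet v
  have h₃ := l2norm_sub_le_l2norm_add
    ((projPerp A S * A) *ᵥ restrictVec x (sparseSupport x \ S)) (projPerp A S *ᵥ v)
  rw [projPerp_mulVec_mulVec_add hdet]
  linarith

lemma l2norm_projPerp_sparseSupport_mulVec_add_le (hδ1 : δ < 1) (hRIP : RIP A k δ)
    (hcard : (sparseSupport x).card ≤ k) (v : Fin m → ℝ) :
    l2norm (projPerp A (sparseSupport x) *ᵥ (A *ᵥ x + v)) ≤ l2norm v := by
  have hdet := isUnit_det_gram A _ hRIP hδ1 hcard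
  rw [mulVec_add, mulVec_mulVec, projPerp_mul_mulVec_eq_zero hdet subset_rfl, zero_add]
  exact l2norm_projPerp_mulVec_le hdet v

lemma omp_step {K : ℕ} (hδ0 : 0 ≤ δ) (hδ1 : δ < 1) (hδ : δ < 1 / √(K + 1))
    (hRIP : RIP A (K + 1) δ) (hx : (sparseSupport x).card ≤ K) (hv : l2norm v ≤ ε)
    (hmin : ∀ i ∈ sparseSupport x, 2 * ε / (1 - √(K + 1) * δ) < |x i|)
    (hS : S ⊂ sparseSupport x) {j : Fin n}
    (hj : ∀ i, |(Aᵀ *ᵥ (projPerp A S *ᵥ (A *ᵥ x + v))) i| ≤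
      |(Aᵀ *ᵥ (projPerp A S *ᵥ (A *ᵥ x + v))) j|) :
    j ∈ sparseSupport x \ S ∧ ε < l2norm (projPerp A S *ᵥ (A *ᵥ x + v)) := by
  have hε : 0 ≤ ε := (l2norm_nonneg v).trans hv
  have hc : √(K + 1) * δ < 1 := by
    rwa [lt_div_iff₀ (Real.sqrt_pos.2 (by positivity)), mul_comm] at hδ
  set T := sparseSupport x \ S
  have hT : T.Nonempty := sdiff_nonempty.2 hS.not_subset
  have hL : 1 ≤ T.card := card_pos.2 hT
  have ha : 2 * ε * √T.card < (1 - √(K + 1) * δ) * l2norm (restrictVec x T) := by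
    have := sqrt_card_mul_lt_l2norm_restrictVec hT (div_nonneg (by positivity) (by linarith))
      fun i hi => hmin i (sdiff_subset hi)
    rw [mul_div_assoc', div_lt_iff₀ (by linarith)] at this
    linarith
  have hsep := selection_margin hL ((card_le_card sdiff_subset).trans hx) hδ0 hδ1 hε hc ha
  exact ⟨omp_selection_mem hδ0 hδ1 hRIP (by omega) hS.subset hv hsep hj,
    omp_residual_gt hδ1 hRIP (by omega) hS.subset hv (residual_margin hL hδ0 hδ1 hε hc ha)⟩

end OMPStep

lemma greedy_support_growth {α : Type*} [DecidableEq α] {Ω : Finset α} {s : ℕ → α}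
    {S : ℕ → Finset α} (hS0 : S 0 = ∅) (hSk : ∀ k, S (k + 1) = S k ∪ {s (k + 1)})
    (hstep : ∀ k, S k ⊂ Ω → s (k + 1) ∈ Ω \ S k) :
    ∀ k ≤ Ω.card, S k ⊆ Ω ∧ (S k).card = k := by
  intro k
  induction k with
  | zero => simp [hS0]
  | succ k ih =>
    intro hk
    obtain ⟨hsub, hcard⟩ := ih (by omega)
    have hmem := mem_sdiff.1 (hstep k (ssubset_of_subset_of_ne hsub ?_))
    · rw [hSk, union_singleton]
      exact ⟨insert_subset hmem.1 hsub, by rw [card_insert_of_notMem hmem.2, hcard]⟩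
    · rintro rfl
      omega

theorem omp_support_recovery_noisy_general {m n K : ℕ}
    (A : Matrix (Fin m) (Fin n) ℝ) (x : Fin n → ℝ) (v : Fin m → ℝ) (ε δ : ℝ)
    (hδ0 : 0 ≤ δ) (hδlt1 : δ < 1)
    (hδ : δ < 1 / Real.sqrt ((K : ℝ) + 1))
    (hRIP : RIP A (K + 1) δ)
    (hx : (sparseSupport x).card ≤ K)
    (hv : l2norm v ≤ ε)
    (hmin : ∀ i ∈ sparseSupport x,
      2 * ε / (1 - Real.sqrt ((K : ℝ) + 1) * δ) < |x i|)
    (y : Fin m → ℝ) (hy : y = A.mulVec x + v)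
    (s : ℕ → Fin n) (S : ℕ → Finset (Fin n)) (r : ℕ → Fin m → ℝ)
    (hS0 : S 0 = ∅)
    (hSk : ∀ k, S (k + 1) = S k ∪ {s (k + 1)})
    (hr : ∀ k, r k = (projPerp A (S k)).mulVec y)
    (hsel : ∀ k, ∀ i : Fin n,
      |(Aᵀ.mulVec (r k)) i| ≤ |(Aᵀ.mulVec (r k)) (s (k + 1))|) :
    (∀ k < (sparseSupport x).card, ε < l2norm (r k)) ∧
    S (sparseSupport x).card = sparseSupport x ∧
    l2norm (r (sparseSupport x).card) ≤ ε := by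
  have hstep (k : ℕ) (hk : S k ⊂ sparseSupport x) :
      s (k + 1) ∈ sparseSupport x \ S k ∧ ε < l2norm (r k) := by
    have hmax := hsel k
    rw [hr, hy] at hmax ⊢
    exact omp_step hδ0 hδlt1 hδ hRIP hx hv hmin hk hmax
  have hgrow := greedy_support_growth hS0 hSk fun k hk => (hstep k hk).1
  have hfinal : S (sparseSupport x).card = sparseSupport x :=
    eq_of_subset_of_card_le (hgrow _ le_rfl).1 (hgrow _ le_rfl).2.ge
  refine ⟨fun k hk => (hstep k ?_).2, hfinal, ?_⟩
  · obtain ⟨hsub, hcard⟩ := hgrow k hk.le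
    exact ssubset_of_subset_of_ne hsub fun h => by rw [h] at hcard; omega
  · rw [hr, hfinal, hy]
    exact (l2norm_projPerp_sparseSupport_mulVec_add_le hδlt1 hRIP (by omega) v).trans hv

/-- Theorem 1: under `δ_{K+1} < 1/√(K+1)` and
`min_{i∈Ω}|x_i| > 2ε/(1−√(K+1)δ)`, OMP with stopping rule `‖r^k‖₂ ≤ ε`
performs exactly `|Ω|` iterations and exactly recovers `Ω = supp(x)`. -/
theorem omp_support_recovery_noisy {m n K : ℕ} (hK : 1 ≤ K)
    (A : Matrix (Fin m) (Fin n) ℝ) (x : Fin n → ℝ) (v : Fin m → ℝ) (ε δ : ℝ)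
    (hδ0 : 0 ≤ δ) (hδlt1 : δ < 1)
    (hδ : δ < 1 / Real.sqrt ((K : ℝ) + 1))
    (hRIP : RIP A (K + 1) δ)
    (hx : (sparseSupport x).card ≤ K)
    (hne : (sparseSupport x).Nonempty)
    (hv : l2norm v ≤ ε)
    (hmin : ∀ i ∈ sparseSupport x,
      2 * ε / (1 - Real.sqrt ((K : ℝ) + 1) * δ) < |x i|)
    (y : Fin m → ℝ) (hy : y = A.mulVec x + v)
    (s : ℕ → Fin n) (S : ℕ → Finset (Fin n)) (r : ℕ → Fin m → ℝ)
    (hS0 : S 0 = ∅)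
    (hSk : ∀ k, S (k + 1) = S k ∪ {s (k + 1)})
    (hr : ∀ k, r k = (projPerp A (S k)).mulVec y)
    (hsel : ∀ k, ∀ i : Fin n,
      |(Aᵀ.mulVec (r k)) i| ≤ |(Aᵀ.mulVec (r k)) (s (k + 1))|) :
    (∀ k < (sparseSupport x).card, ε < l2norm (r k)) ∧
    S (sparseSupport x).card = sparseSupport x ∧
    l2norm (r (sparseSupport x).card) ≤ ε :=
  omp_support_recovery_noisy_general A x v ε δ hδ0 hδlt1 hδ hRIP hx hv hmin y hy s S r hS0 hSk hr
    hsel
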